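/- Let C be a model category satisfying the Realization Axiom and sC its simplicial objects with the Reedy model structure. A map in sC is a Reedy trivial fibration if and only if it is an equifibered Reedy fibration that is also a realization weak equivalence. -/

import Mathlib

open CategoryTheory Limits Simplicial Opposite

universe v u

/-- A retract of a morphism `g` in the arrow category. -/
def IsRetractOf {C : Type u} [Category.{v} C] {X Y Z W : C}
    (f : X ⟶ Y) (g : Z ⟶ W) : Prop :=
  ∃ (i : X ⟶ Z) (r : Z ⟶ X) (j : Y ⟶ W) (s : W ⟶ Y),
    i ≫ r = 𝟙 X ∧ j ≫ s = 𝟙 Y ∧ i ≫ g = f ≫ j ∧ g ≫ s = r ≫ f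

/-- A (Quillen) model structure on a category `C`: three classes of morphisms,
weak equivalences, cofibrations and fibrations, satisfying the two-out-of-three
axiom, closure under retracts, the lifting axioms and the factorization axioms. -/
structure ModelStructure (C : Type u) [Category.{v} C] where
  W : MorphismProperty C
  Cof : MorphismProperty C
  Fib : MorphismProperty C
  w_of_isos : ∀ {X Y : C} (f : X ⟶ Y), IsIso f → W f
  w_comp : ∀ {X Y Z : C} (f : X ⟶ Y) (g : Y ⟶ Z), W f → W g → W (f ≫ g)
  w_cancel_left : ∀ {X Y Z : C} (f : X ⟶ Y) (g : Y ⟶ Z), W f → W (f ≫ g) → W g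
  w_cancel_right : ∀ {X Y Z : C} (f : X ⟶ Y) (g : Y ⟶ Z), W g → W (f ≫ g) → W f
  w_retract : ∀ {X Y Z W' : C} (f : X ⟶ Y) (g : Z ⟶ W'), IsRetractOf f g → W g → W f
  cof_retract : ∀ {X Y Z W' : C} (f : X ⟶ Y) (g : Z ⟶ W'), IsRetractOf f g → Cof g → Cof f
  fib_retract : ∀ {X Y Z W' : C} (f : X ⟶ Y) (g : Z ⟶ W'), IsRetractOf f g → Fib g → Fib f
  lift_triv_cof : ∀ {A B X Y : C} (i : A ⟶ B) (p : X ⟶ Y),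
    Cof i → W i → Fib p → HasLiftingProperty i p
  lift_triv_fib : ∀ {A B X Y : C} (i : A ⟶ B) (p : X ⟶ Y),
    Cof i → Fib p → W p → HasLiftingProperty i p
  fact_cof_trivFib : ∀ {X Y : C} (f : X ⟶ Y),
    ∃ (Z : C) (i : X ⟶ Z) (p : Z ⟶ Y), Cof i ∧ Fib p ∧ W p ∧ i ≫ p = f
  fact_trivCof_fib : ∀ {X Y : C} (f : X ⟶ Y),
    ∃ (Z : C) (i : X ⟶ Z) (p : Z ⟶ Y), Cof i ∧ W i ∧ Fib p ∧ i ≫ p = f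

namespace ModelStructure

variable {C : Type u} [Category.{v} C] (M : ModelStructure C)

/-- An object is cofibrant if the map from the initial object is a cofibration. -/
def Cofibrant [HasInitial C] (A : C) : Prop := M.Cof (initial.to A)

/-- An object is fibrant if the map to the terminal object is a fibration. -/
def Fibrant [HasTerminal C] (X : C) : Prop := M.Fib (terminal.from X)

/-- Left properness: the pushout of a weak equivalence along a cofibration is a
weak equivalence. -/
def LeftProper : Prop :=
  ∀ ⦃Z X Y P : C⦄ (f : Z ⟶ X) (g : Z ⟶ Y) (h : X ⟶ P) (k : Y ⟶ P),
    IsPushout f g h k → M.W f → M.Cof g → M.W k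

/-- Right properness: the pullback of a weak equivalence along a fibration is a
weak equivalence. -/
def RightProper : Prop :=
  ∀ ⦃P X Y Z : C⦄ (h : P ⟶ X) (k : P ⟶ Y) (f : X ⟶ Z) (g : Y ⟶ Z),
    IsPullback h k f g → M.W f → M.Fib g → M.W h

end ModelStructure
section Core1
open CategoryTheory Limits Simplicial Opposite

variable (C : Type u) [Category.{v} C]

/-- The constant simplicial object functor `c : C ⥤ sC`. -/
abbrev constSimp : C ⥤ SimplicialObject C := Functor.const _

/-- Evaluation at simplicial degree zero, `Ev : sC ⥤ C`. -/
abbrev ev0 : SimplicialObject C ⥤ C := (evaluation _ _).obj (op (⦋0⦌ : SimplexCategory))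

variable {C}

/-- The class of level weak equivalences in `sC` relative to a model structure on `C`. -/
def levelWE (M : ModelStructure C) : MorphismProperty (SimplicialObject C) :=
  fun _ _ f => ∀ Δ : SimplexCategoryᵒᵖ, M.W (f.app Δ)

/-- An object of `sC` is homotopically constant if all its simplicial face and
degeneracy operators are weak equivalences in `C`. -/
def HomotopicallyConstant (M : ModelStructure C) (X : SimplicialObject C) : Prop :=
  (∀ (n : ℕ) (i : Fin (n + 2)), M.W (X.δ i)) ∧ ∀ (n : ℕ) (i : Fin (n + 1)), M.W (X.σ i)

end Core1

section Matching
open CategoryTheory Limits Simplicial Opposite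

variable {C : Type u} [Category.{v} C] [HasLimitsOfSize.{0,0} C] [HasColimitsOfSize.{0,0} C]

/-- The matching category of `[n]`: surjections `[n] → [j]` in `Δᵒᵖ` (i.e. maps
`op ⦋n⦌ ⟶ op ⦋j⦌` that are epimorphisms in `Δᵒᵖ`) with `j < n`. -/
def MatchingCat (n : ℕ) : Type :=
  ObjectProperty.FullSubcategory (fun u : Under (op (⦋n⦌ : SimplexCategory)) =>
    u.right.unop.len < n ∧ Epi u.hom)

instance (n : ℕ) : Category (MatchingCat n) := by
  dsimp [MatchingCat]; infer_instance

/-- The diagram over the matching category associated to a simplicial object. -/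
def matchingDiagram (n : ℕ) (X : SimplicialObject C) : MatchingCat n ⥤ C :=
  ObjectProperty.ι _ ⋙ Under.forget _ ⋙ X

/-- The `n`-th matching object `M_n X` of a simplicial object `X`. -/
noncomputable def matchingObject (n : ℕ) (X : SimplicialObject C) : C :=
  limit (matchingDiagram n X)

/-- The canonical map `X_n ⟶ M_n X`. -/
noncomputable def matchingMap (n : ℕ) (X : SimplicialObject C) :
    X.obj (op ⦋n⦌) ⟶ matchingObject n X :=
  limit.lift (matchingDiagram n X)
    { pt := X.obj (op ⦋n⦌)
      π :=
        { app := fun u => X.map u.obj.hom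
          naturality := fun u v m => by
            dsimp [matchingDiagram]
            erw [Category.id_comp, ← X.map_comp]
            exact congrArg X.map (Under.w ((ObjectProperty.ι _).map m)).symm } }

/-- The map `M_n X ⟶ M_n Y` induced by a map `f : X ⟶ Y` in `sC`. -/
noncomputable def matchingObjMap (n : ℕ) {X Y : SimplicialObject C} (f : X ⟶ Y) :
    matchingObject n X ⟶ matchingObject n Y :=
  limMap (Functor.whiskerLeft (ObjectProperty.ι _ ⋙ Under.forget _) f)

lemma matching_comm (n : ℕ) {X Y : SimplicialObject C} (f : X ⟶ Y) :
    f.app (op ⦋n⦌) ≫ matchingMap n Y = matchingMap n X ≫ matchingObjMap n f := by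
  apply limit.hom_ext
  intro u
  erw [Category.assoc, Category.assoc]
  dsimp only [matchingMap, matchingObjMap]
  erw [limit.lift_π, limMap_π, limit.lift_π_assoc]
  exact (f.naturality _).symm

/-- The relative matching map `X_n ⟶ Y_n ×_{M_n Y} M_n X` of a map `f : X ⟶ Y`. -/
noncomputable def relMatchingMap (n : ℕ) {X Y : SimplicialObject C} (f : X ⟶ Y) :
    X.obj (op ⦋n⦌) ⟶ pullback (matchingMap n Y) (matchingObjMap n f) :=
  pullback.lift (f.app (op ⦋n⦌)) (matchingMap n X) (matching_comm n f)

/-- A map in `sC` is a Reedy fibration if all its relative matching maps are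
fibrations in `C`. -/
def ReedyFibration (M : ModelStructure C) {X Y : SimplicialObject C} (f : X ⟶ Y) : Prop :=
  ∀ n : ℕ, M.Fib (relMatchingMap n f)

/-- An object `X` of `sC` is Reedy fibrant if all its matching maps `X_n ⟶ M_n X`
are fibrations in `C`. -/
def ReedyFibrantObj (M : ModelStructure C) (X : SimplicialObject C) : Prop :=
  ∀ n : ℕ, M.Fib (matchingMap n X)

end Matching

section Latching
open CategoryTheory Limits Simplicial Opposite

variable {C : Type u} [Category.{v} C] [HasLimitsOfSize.{0,0} C] [HasColimitsOfSize.{0,0} C]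

/-- The latching category of `[n]`: injections `[j] → [n]` in `Δᵒᵖ` (i.e. maps
`op ⦋j⦌ ⟶ op ⦋n⦌` that are monomorphisms in `Δᵒᵖ`) with `j < n`. -/
def LatchingCat (n : ℕ) : Type :=
  ObjectProperty.FullSubcategory (fun u : Over (op (⦋n⦌ : SimplexCategory)) =>
    u.left.unop.len < n ∧ Mono u.hom)

instance (n : ℕ) : Category (LatchingCat n) := by
  dsimp [LatchingCat]; infer_instance

/-- The diagram over the latching category associated to a simplicial object. -/
def latchingDiagram (n : ℕ) (X : SimplicialObject C) : LatchingCat n ⥤ C :=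
  ObjectProperty.ι _ ⋙ Over.forget _ ⋙ X

/-- The `n`-th latching object `L_n X` of a simplicial object `X`. -/
noncomputable def latchingObject (n : ℕ) (X : SimplicialObject C) : C :=
  colimit (latchingDiagram n X)

/-- The canonical map `L_n X ⟶ X_n`. -/
noncomputable def latchingMap (n : ℕ) (X : SimplicialObject C) :
    latchingObject n X ⟶ X.obj (op ⦋n⦌) :=
  colimit.desc (latchingDiagram n X)
    { pt := X.obj (op ⦋n⦌)
      ι :=
        { app := fun u => X.map u.obj.hom
          naturality := fun u v m => by
            dsimp [latchingDiagram]
            erw [Category.comp_id, ← X.map_comp]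
            exact congrArg X.map (Over.w ((ObjectProperty.ι _).map m)) } }

/-- The map `L_n X ⟶ L_n Y` induced by a map `f : X ⟶ Y` in `sC`. -/
noncomputable def latchingObjMap (n : ℕ) {X Y : SimplicialObject C} (f : X ⟶ Y) :
    latchingObject n X ⟶ latchingObject n Y :=
  colimMap (Functor.whiskerLeft (ObjectProperty.ι _ ⋙ Over.forget _) f)

lemma latching_comm (n : ℕ) {X Y : SimplicialObject C} (f : X ⟶ Y) :
    latchingObjMap n f ≫ latchingMap n Y = latchingMap n X ≫ f.app (op ⦋n⦌) := by
  apply colimit.hom_ext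
  intro u
  simp only [latchingMap, latchingObjMap, latchingDiagram]
  erw [ι_colimMap_assoc, colimit.ι_desc, colimit.ι_desc_assoc]
  exact (f.naturality _).symm

/-- The relative latching map `X_n ⊔_{L_n X} L_n Y ⟶ Y_n` of a map `f : X ⟶ Y`. -/
noncomputable def relLatchingMap (n : ℕ) {X Y : SimplicialObject C} (f : X ⟶ Y) :
    pushout (latchingMap n X) (latchingObjMap n f) ⟶ Y.obj (op ⦋n⦌) :=
  pushout.desc (f.app (op ⦋n⦌)) (latchingMap n Y) (latching_comm n f).symm

/-- A map in `sC` is a Reedy cofibration if all its relative latching maps are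
cofibrations in `C`. -/
def ReedyCofibration (M : ModelStructure C) {X Y : SimplicialObject C} (f : X ⟶ Y) : Prop :=
  ∀ n : ℕ, M.Cof (relLatchingMap n f)

end Latching
section Instances
open CategoryTheory Limits

instance simplicialObjectHasLimits {C : Type u} [Category.{v} C]
    [HasLimitsOfSize.{0,0} C] : HasLimitsOfSize.{0,0} (SimplicialObject C) := by
  dsimp [SimplicialObject]; infer_instance

instance simplicialObjectHasColimits {C : Type u} [Category.{v} C]
    [HasColimitsOfSize.{0,0} C] : HasColimitsOfSize.{0,0} (SimplicialObject C) := by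
  dsimp [SimplicialObject]; infer_instance

end Instances
section Equifibered
open CategoryTheory Limits Simplicial Opposite

variable {C : Type u} [Category.{v} C] [HasLimitsOfSize.{0,0} C] [HasColimitsOfSize.{0,0} C]

/-- The map `X_{m+1} ⟶ X_m ×_{Y_m} Y_{m+1}` induced by the face operator `d_i`
and a map `f : X ⟶ Y` in `sC`. -/
noncomputable def equifiberedMap {X Y : SimplicialObject C} (f : X ⟶ Y)
    (m : ℕ) (i : Fin (m + 2)) :
    X.obj (op ⦋m + 1⦌) ⟶ pullback (f.app (op ⦋m⦌)) (Y.δ i) :=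
  pullback.lift (X.δ i) (f.app (op ⦋m + 1⦌)) (f.naturality (SimplexCategory.δ i).op)

/-- A Reedy fibration `f : X ⟶ Y` is equifibered if all the maps
`X_{m+1} ⟶ X_m ×_{Y_m} Y_{m+1}` induced by face operators are weak equivalences. -/
def EquifiberedReedyFibration (M : ModelStructure C) {X Y : SimplicialObject C}
    (f : X ⟶ Y) : Prop :=
  ReedyFibration M f ∧ ∀ (m : ℕ) (i : Fin (m + 2)), M.W (equifiberedMap f m i)

end Equifibered

section Realization
open CategoryTheory Limits Simplicial Opposite

variable {C : Type u} [Category.{v} C]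

/-- The hom-sets `[A, B]^{HR}` in the homotopy category of the Reedy model
structure on `sC`, realized as the localization of `sC` at the level weak
equivalences. -/
noncomputable abbrev reedyHo (M : ModelStructure C) :
    SimplicialObject C ⥤ (levelWE M).Localization :=
  (levelWE M).Q

/-- A map `f` in `sC` is a realization weak equivalence if for every `Z` in `C`
it induces a bijection `[B, cZ]^{HR} → [A, cZ]^{HR}` on homotopy classes of maps
into constant objects in the Reedy homotopy category. -/
def RealizationWE (M : ModelStructure C) {A B : SimplicialObject C} (f : A ⟶ B) : Prop :=
  ∀ Z : C, Function.Bijective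
    (fun g : (reedyHo M).obj B ⟶ (reedyHo M).obj ((constSimp C).obj Z) =>
      (reedyHo M).map f ≫ g)

variable [HasLimitsOfSize.{0,0} C] [HasColimitsOfSize.{0,0} C]

/-- The Realization Axiom: every equifibered Reedy fibration which is a
realization weak equivalence is a level weak equivalence. -/
def RealizationAxiom (M : ModelStructure C) : Prop :=
  ∀ ⦃X Y : SimplicialObject C⦄ (f : X ⟶ Y),
    EquifiberedReedyFibration M f → RealizationWE M f → levelWE M f

end Realization

section Canonical
open CategoryTheory Limits Simplicial Opposite

variable {C : Type u} [Category.{v} C] [HasLimitsOfSize.{0,0} C] [HasColimitsOfSize.{0,0} C]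

/-- A model structure `N` on `sC` is the canonical one (relative to a model
structure `M` on `C`) if every level weak equivalence is a weak equivalence, the
cofibrations are exactly the Reedy cofibrations, and the fibrant objects are
exactly the homotopically constant Reedy fibrant objects. -/
def IsCanonical [HasTerminal (SimplicialObject C)] (M : ModelStructure C)
    (N : ModelStructure (SimplicialObject C)) : Prop :=
  (∀ ⦃X Y : SimplicialObject C⦄ (f : X ⟶ Y), levelWE M f → N.W f) ∧
  (∀ ⦃X Y : SimplicialObject C⦄ (f : X ⟶ Y), N.Cof f ↔ ReedyCofibration M f) ∧
  (∀ X : SimplicialObject C, N.Fibrant X ↔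
    (HomotopicallyConstant M X ∧ ReedyFibrantObj M X))

end Canonical

/-! A Reedy fibration `f : X ⟶ Y` which is a level weak equivalence is levelwise a trivial
fibration. By strong induction on `n`, the relative matching maps `X_j ⟶ Y_j ×_{M_j Y} M_j X`
for `j < n` are trivial fibrations (their composite with the base change of `M_j f` is `f_j`),
and a lift against `M_n f` is then built face by face of `[n]`, by increasing dimension, by
lifting against them. So the base change `X_m ×_{Y_m} Y_{m+1} ⟶ Y_{m+1}` of `f_m` is a weak
equivalence, hence so is the equifibered map by two-out-of-three; and `f` becomes invertible in
the Reedy homotopy category. The converse is the Realization Axiom. -/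

namespace ModelStructure

variable {C : Type u} [Category.{v} C] (M : ModelStructure C)

lemma rlp_cof_iff {A B : C} (p : A ⟶ B) : M.Cof.rlp p ↔ M.Fib p ∧ M.W p := by
  refine ⟨fun hp => ?_, fun ⟨hF, hW⟩ _ _ i hi => M.lift_triv_fib i p hi hF hW⟩
  obtain ⟨Z, i, q, hi, hq, hwq, rfl⟩ := M.fact_cof_trivFib p
  have := hp i hi
  have sq : CommSq (𝟙 A) i (i ≫ q) q := ⟨by simp⟩
  have hret : IsRetractOf (i ≫ q) q :=
    ⟨i, sq.lift, 𝟙 _, 𝟙 _, sq.fac_left, by simp, by simp, by simp [sq.fac_right]⟩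
  exact ⟨M.fib_retract _ q hret hq, M.w_retract _ q hret hwq⟩

end ModelStructure

namespace MatchingCat

variable {n : ℕ}

abbrev len (u : MatchingCat n) : ℕ := u.obj.right.unop.len

lemma len_lt (u : MatchingCat n) : u.len < n := u.property.1

instance (u : MatchingCat n) : Epi u.obj.hom := u.property.2

instance {u v : MatchingCat n} (g : u ⟶ v) : Epi g.hom.right :=
  epi_of_epi_fac (Under.w g.hom)

lemma len_le_of_hom {u v : MatchingCat n} (g : u ⟶ v) : v.len ≤ u.len :=
  SimplexCategory.len_le_of_mono g.hom.right.unop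

lemma eq_eqToHom_of_len_le {u v : MatchingCat n} (g : u ⟶ v) (h : u.len ≤ v.len) :
    ∃ e : u = v, g = eqToHom e := by
  have hlen := le_antisymm (len_le_of_hom g) h
  have : Mono g.hom.right.unop := inferInstance
  obtain ⟨⟨⟨⟨⟩⟩, ⟨R⟩, φ⟩, hu⟩ := u
  obtain ⟨⟨⟨⟨⟩⟩, ⟨R'⟩, φ'⟩, hv⟩ := v
  obtain rfl : R' = R := SimplexCategory.ext hlen
  have hg : g.hom.right = 𝟙 _ := Quiver.Hom.unop_inj (SimplexCategory.eq_id_of_mono _)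
  obtain rfl : φ' = φ := by simpa [hg] using (Under.w g.hom).symm
  exact ⟨rfl, ObjectProperty.hom_ext _ (Under.UnderMorphism.ext hg)⟩

def map (u : MatchingCat n) : MatchingCat u.len ⥤ MatchingCat n :=
  ObjectProperty.lift _ (ObjectProperty.ι _ ⋙ Under.map u.obj.hom)
    fun w => ⟨w.len_lt.trans u.len_lt, show Epi (u.obj.hom ≫ w.obj.hom) from inferInstance⟩

def toMapObj (u : MatchingCat n) (w : MatchingCat u.len) : u ⟶ u.map.obj w :=
  ObjectProperty.homMk (Under.homMk w.obj.hom)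

end MatchingCat

section MatchingObject

variable {C : Type u} [Category.{v} C] [HasLimitsOfSize.{0,0} C] {n : ℕ}

namespace matchingObject

variable (Z : SimplicialObject C)

noncomputable def π (u : MatchingCat n) : matchingObject n Z ⟶ Z.obj u.obj.right :=
  limit.π (matchingDiagram n Z) u

lemma π_map {u v : MatchingCat n} (g : u ⟶ v) : π Z u ≫ Z.map g.hom.right = π Z v :=
  limit.w (matchingDiagram n Z) g

variable {Z}

lemma hom_ext {W : C} {g h : W ⟶ matchingObject n Z} (H : ∀ u, g ≫ π Z u = h ≫ π Z u) :
    g = h :=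
  limit.hom_ext H

noncomputable def lift {W : C} (s : ∀ u : MatchingCat n, W ⟶ Z.obj u.obj.right)
    (hs : ∀ {u v : MatchingCat n} (g : u ⟶ v), s u ≫ Z.map g.hom.right = s v) :
    W ⟶ matchingObject n Z :=
  limit.lift (matchingDiagram n Z)
    { pt := W
      π := { app := s, naturality := fun _ _ g => (Category.id_comp _).trans (hs g).symm } }

@[simp]
lemma lift_π {W : C} (s : ∀ u : MatchingCat n, W ⟶ Z.obj u.obj.right)
    (hs : ∀ {u v : MatchingCat n} (g : u ⟶ v), s u ≫ Z.map g.hom.right = s v)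
    (u : MatchingCat n) : lift s hs ≫ π Z u = s u :=
  limit.lift_π _ _

end matchingObject

open matchingObject

@[simp]
lemma matchingMap_π (Z : SimplicialObject C) (u : MatchingCat n) :
    matchingMap n Z ≫ π Z u = Z.map u.obj.hom :=
  limit.lift_π _ _

lemma matchingObjMap_π {X Y : SimplicialObject C} (f : X ⟶ Y) (u : MatchingCat n) :
    matchingObjMap n f ≫ π Y u = π X u ≫ f.app u.obj.right :=
  limMap_π _ _

lemma π_matchingMap_π (Z : SimplicialObject C) (u : MatchingCat n) (w : MatchingCat u.len) :
    π Z u ≫ matchingMap u.len Z ≫ π Z w = π Z (u.map.obj w) := by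
  rw [matchingMap_π]
  exact π_map Z (u.toMapObj w)

end MatchingObject

section RelativeMatchingMap

variable {C : Type u} [Category.{v} C] [HasLimitsOfSize.{0,0} C] [HasColimitsOfSize.{0,0} C]
  (n : ℕ) {X Y : SimplicialObject C} (f : X ⟶ Y)

lemma relMatchingMap_fst : relMatchingMap n f ≫ pullback.fst _ _ = f.app (op ⦋n⦌) :=
  pullback.lift_fst _ _ _

lemma relMatchingMap_snd : relMatchingMap n f ≫ pullback.snd _ _ = matchingMap n X :=
  pullback.lift_snd _ _ _

end RelativeMatchingMap

section MatchingLift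

open matchingObject

variable {C : Type u} [Category.{v} C] [HasLimitsOfSize.{0,0} C]
  {X Y : SimplicialObject C} {f : X ⟶ Y} {n : ℕ} {A B : C} {a : A ⟶ matchingObject n X}
  {i : A ⟶ B} {b : B ⟶ matchingObject n Y}

/-- A lift in `sq` built only on the faces of `[n]` of dimension `< k`: a compatible family of
maps `B ⟶ X_u`, which for `k = n` is a map `B ⟶ M_n X`. -/
structure MatchingLift (sq : CommSq a i (matchingObjMap n f) b) (k : ℕ) where
  lift (u : MatchingCat n) : u.len < k → (B ⟶ X.obj u.obj.right)
  fac_left (u : MatchingCat n) (hu : u.len < k) :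
    i ≫ lift u hu = a ≫ π X u
  fac_right (u : MatchingCat n) (hu : u.len < k) :
    lift u hu ≫ f.app u.obj.right = b ≫ π Y u
  naturality {u v : MatchingCat n} (g : u ⟶ v) (hu : u.len < k) (hv : v.len < k) :
    lift u hu ≫ X.map g.hom.right = lift v hv

namespace MatchingLift

variable {sq : CommSq a i (matchingObjMap n f) b} {k : ℕ} (L : MatchingLift sq k)

variable (sq) in
def zero : MatchingLift sq 0 where
  lift _ h := absurd h (Nat.not_lt_zero _)
  fac_left _ h := absurd h (Nat.not_lt_zero _)
  fac_right _ h := absurd h (Nat.not_lt_zero _)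
  naturality _ h := absurd h (Nat.not_lt_zero _)

noncomputable def faceLift (u : MatchingCat n) (hu : u.len ≤ k) :
    B ⟶ matchingObject u.len X :=
  matchingObject.lift (fun w => L.lift (u.map.obj w) (w.len_lt.trans_le hu))
    fun g => L.naturality (u.map.map g) _ _

lemma faceLift_π (u : MatchingCat n) (hu : u.len ≤ k) (w : MatchingCat u.len) :
    L.faceLift u hu ≫ π X w = L.lift (u.map.obj w) (w.len_lt.trans_le hu) :=
  lift_π _ (fun g => L.naturality (u.map.map g) _ _) w

variable [HasColimitsOfSize.{0,0} C]

/-- The lift at a face `u` solves a lifting problem against the relative matching map at `u`,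
whose bottom map is assembled from the lifts already built on the faces of `u`. -/
lemma exists_lift (u : MatchingCat n) (hu : u.len ≤ k)
    (hl : HasLiftingProperty i (relMatchingMap u.len f)) :
    ∃ l : B ⟶ X.obj u.obj.right,
      i ≫ l = a ≫ π X u ∧
      l ≫ f.app u.obj.right = b ≫ π Y u ∧
      ∀ {v : MatchingCat n} (g : u ⟶ v) (hv : v.len < u.len),
        l ≫ X.map g.hom.right = L.lift v (hv.trans_le hu) := by
  have hb : (b ≫ π Y u) ≫ matchingMap u.len Y =
      L.faceLift u hu ≫ matchingObjMap u.len f := by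
    refine hom_ext fun w => ?_
    simp only [Category.assoc, π_matchingMap_π, matchingObjMap_π]
    rw [← Category.assoc, faceLift_π]
    exact (L.fac_right _ _).symm
  have hsq : CommSq (a ≫ π X u) i (relMatchingMap u.len f)
      (pullback.lift _ _ hb) := by
    constructor
    apply pullback.hom_ext
    · simp only [Category.assoc, relMatchingMap_fst, pullback.lift_fst]
      rw [← matchingObjMap_π, ← Category.assoc, sq.w, Category.assoc]
    · simp only [Category.assoc, relMatchingMap_snd, pullback.lift_snd]
      refine hom_ext fun w => ?_
      simp only [Category.assoc, π_matchingMap_π, faceLift_π]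
      exact (L.fac_left _ _).symm
  have hfst : hsq.lift ≫ f.app (op ⦋u.len⦌) = b ≫ π Y u := by
    simpa only [Category.assoc, relMatchingMap_fst, pullback.lift_fst]
      using hsq.fac_right =≫ pullback.fst _ _
  have hsnd : hsq.lift ≫ matchingMap u.len X = L.faceLift u hu := by
    simpa only [Category.assoc, relMatchingMap_snd, pullback.lift_snd]
      using hsq.fac_right =≫ pullback.snd _ _
  refine ⟨hsq.lift, hsq.fac_left, hfst, fun {v} g hv => ?_⟩
  let w : MatchingCat u.len := ⟨Under.mk g.hom.right, hv, inferInstanceAs (Epi g.hom.right)⟩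
  let e : u.map.obj w ⟶ v :=
    ObjectProperty.homMk (Under.homMk (𝟙 _) ((Category.comp_id _).trans (Under.w g.hom)))
  have hface : hsq.lift ≫ X.map g.hom.right = L.faceLift u hu ≫ π X w := by
    have := hsnd =≫ π X w
    rwa [Category.assoc, matchingMap_π] at this
  have he : X.map e.hom.right = 𝟙 _ := X.map_id _
  rw [hface, L.faceLift_π u hu w, ← L.naturality e, he]
  exact (Category.comp_id _).symm

variable (hrel : ∀ j < n, HasLiftingProperty i (relMatchingMap j f))

noncomputable def nextLift (u : MatchingCat n) (hu : u.len ≤ k) : B ⟶ X.obj u.obj.right :=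
  (L.exists_lift u hu (hrel _ u.len_lt)).choose

lemma nextLift_spec (u : MatchingCat n) (hu : u.len ≤ k) :
    i ≫ L.nextLift hrel u hu = a ≫ π X u ∧
      L.nextLift hrel u hu ≫ f.app u.obj.right = b ≫ π Y u ∧
      ∀ {v : MatchingCat n} (g : u ⟶ v) (hv : v.len < u.len),
        L.nextLift hrel u hu ≫ X.map g.hom.right = L.lift v (hv.trans_le hu) :=
  (L.exists_lift u hu (hrel _ u.len_lt)).choose_spec

noncomputable def extend : MatchingLift sq (k + 1) where
  lift u hu := if h : u.len < k then L.lift u h else L.nextLift hrel u (by omega)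
  fac_left u hu := by
    split_ifs with h
    exacts [L.fac_left u h, (L.nextLift_spec hrel u _).1]
  fac_right u hu := by
    split_ifs with h
    exacts [L.fac_right u h, (L.nextLift_spec hrel u _).2.1]
  naturality {u v} g hu hv := by
    have hvu := MatchingCat.len_le_of_hom g
    by_cases hvk : v.len < k
    · by_cases huk : u.len < k
      · rw [dif_pos huk, dif_pos hvk]
        exact L.naturality g huk hvk
      · rw [dif_neg huk, dif_pos hvk]
        exact (L.nextLift_spec hrel u _).2.2 g (by omega)
    · obtain ⟨rfl, rfl⟩ := MatchingCat.eq_eqToHom_of_len_le g (by omega)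
      change _ ≫ X.map (𝟙 _) = _
      rw [X.map_id, Category.comp_id]

variable (sq) in
noncomputable def build (k : ℕ) : MatchingLift sq k :=
  Nat.rec (zero sq) (fun _ L => L.extend hrel) k

end MatchingLift

variable [HasColimitsOfSize.{0,0} C]

lemma hasLiftingProperty_matchingObjMap
    (hrel : ∀ j < n, HasLiftingProperty i (relMatchingMap j f)) :
    HasLiftingProperty i (matchingObjMap n f) where
  sq_hasLift sq :=
    let L := MatchingLift.build sq hrel n
    ⟨⟨{ l := matchingObject.lift (fun u => L.lift u u.len_lt) fun g => L.naturality g _ _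
        fac_left := hom_ext fun u => by rw [Category.assoc, lift_π, L.fac_left]
        fac_right := hom_ext fun u => by
          rw [Category.assoc, matchingObjMap_π, ← Category.assoc, lift_π, L.fac_right] }⟩⟩

end MatchingLift

lemma equifiberedMap_snd {C : Type u} [Category.{v} C] [HasLimitsOfSize.{0,0} C]
    {X Y : SimplicialObject C} (f : X ⟶ Y) (m : ℕ) (j : Fin (m + 2)) :
    equifiberedMap f m j ≫ pullback.snd _ _ = f.app (op ⦋m + 1⦌) :=
  pullback.lift_snd _ _ _

section ReedyTrivialFibration

variable {C : Type u} [Category.{v} C] [HasLimitsOfSize.{0,0} C] [HasColimitsOfSize.{0,0} C]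
  (M : ModelStructure C) {X Y : SimplicialObject C} {f : X ⟶ Y}

lemma rlp_cof_relMatchingMap (hf : ReedyFibration M f) (hw : levelWE M f) {n : ℕ}
    (h : M.Cof.rlp (matchingObjMap n f)) : M.Cof.rlp (relMatchingMap n f) := by
  have hfst : M.W (pullback.fst (matchingMap n Y) (matchingObjMap n f)) :=
    ((M.rlp_cof_iff _).1 (M.Cof.rlp.pullback_fst _ _ h)).2
  refine (M.rlp_cof_iff _).2 ⟨hf n, M.w_cancel_right _ _ hfst ?_⟩
  rw [relMatchingMap_fst]
  exact hw _

lemma rlp_cof_matchingObjMap (hf : ReedyFibration M f) (hw : levelWE M f) (n : ℕ) :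
    M.Cof.rlp (matchingObjMap n f) := by
  induction n using Nat.strong_induction_on with
  | _ n ih =>
    exact fun _ _ i hi => hasLiftingProperty_matchingObjMap fun j hj =>
      rlp_cof_relMatchingMap M hf hw (ih j hj) i hi

lemma rlp_cof_app (hf : ReedyFibration M f) (hw : levelWE M f) (n : ℕ) :
    M.Cof.rlp (f.app (op ⦋n⦌)) := by
  have h := rlp_cof_matchingObjMap M hf hw n
  rw [← relMatchingMap_fst]
  exact M.Cof.rlp.comp_mem _ _ (rlp_cof_relMatchingMap M hf hw h)
    (M.Cof.rlp.pullback_fst _ _ h)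

lemma w_equifiberedMap (hf : ReedyFibration M f) (hw : levelWE M f) (m : ℕ)
    (j : Fin (m + 2)) :
    M.W (equifiberedMap f m j) := by
  have hsnd : M.W (pullback.snd (f.app (op ⦋m⦌)) (Y.δ j)) :=
    ((M.rlp_cof_iff _).1 (M.Cof.rlp.pullback_snd _ _ (rlp_cof_app M hf hw m))).2
  refine M.w_cancel_right _ _ hsnd ?_
  rw [equifiberedMap_snd]
  exact hw _

end ReedyTrivialFibration

lemma realizationWE_of_levelWE {C : Type u} [Category.{v} C] (M : ModelStructure C)
    {X Y : SimplicialObject C} {f : X ⟶ Y} (hw : levelWE M f) : RealizationWE M f := fun _ =>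
  have := Localization.inverts (reedyHo M) (levelWE M) f hw
  (asIso ((reedyHo M).map f)).symm.homFromEquiv.bijective

open CategoryTheory Limits Simplicial Opposite in
/-- For a model category `C` satisfying the Realization Axiom, a map in `sC` is
a Reedy trivial fibration (a Reedy fibration and a level weak equivalence) if
and only if it is an equifibered Reedy fibration which is also a realization
weak equivalence. -/
theorem reedy_trivFib_iff_equifibered_realizationWE {C : Type u} [Category.{v} C]
    [HasLimitsOfSize.{0,0} C] [HasColimitsOfSize.{0,0} C]
    (M : ModelStructure C) (hM : RealizationAxiom M)
    {X Y : SimplicialObject C} (f : X ⟶ Y) :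
    (ReedyFibration M f ∧ levelWE M f) ↔
      (EquifiberedReedyFibration M f ∧ RealizationWE M f) :=
  ⟨fun ⟨hf, hw⟩ => ⟨⟨hf, w_equifiberedMap M hf hw⟩, realizationWE_of_levelWE M hw⟩,
    fun ⟨he, hr⟩ => ⟨he.1, hM f he hr⟩⟩
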